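/- The security condition h(β) < 3 − 4·f(β) with the no-signaling monogamy f(β) = 3/2 − β reduces to h(β) < 4β − 3, and this fails for all β ≤ (1/2)(1 + 1/√2) ≈ 0.8536; specifically, at β = (1/2)(1+1/√2), h(β) > 4β − 3. -/

import Mathlib

/-- Binary Shannon entropy (base-2 logarithm). -/
noncomputable def binH (p : ℝ) : ℝ :=
  -(p * Real.logb 2 p) - (1 - p) * Real.logb 2 (1 - p)

lemma binH_eq_binEntropy (p : ℝ) : binH p = Real.binEntropy p / Real.log 2 := by
  unfold binH Real.binEntropy Real.logb
  rw [Real.log_inv, Real.log_inv]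
  ring

lemma binH_half : binH (1/2) = 1 := by
  have hl : Real.logb 2 (1/2 : ℝ) = -1 := by
    rw [one_div, Real.logb_inv, Real.logb_self_eq_one (by norm_num)]
  unfold binH
  rw [show (1:ℝ) - 1/2 = 1/2 by norm_num, hl]
  norm_num

lemma sqrt2_facts : (1.4 : ℝ) < Real.sqrt 2 ∧ Real.sqrt 2 < 1.43 := by
  have h := Real.sq_sqrt (by norm_num : (2:ℝ) ≥ 0)
  have h0 := Real.sqrt_nonneg 2
  constructor <;> nlinarith

lemma beta0_eq : (1/2 : ℝ) * (1 + 1 / Real.sqrt 2) = (2 + Real.sqrt 2) / 4 := by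
  have h := Real.sq_sqrt (by norm_num : (2:ℝ) ≥ 0)
  have h1 : Real.sqrt 2 ≠ 0 := by nlinarith [sqrt2_facts.1]
  field_simp
  nlinarith

lemma endpoint_strict : binH ((1/2) * (1 + 1 / Real.sqrt 2))
      > 4 * ((1/2) * (1 + 1 / Real.sqrt 2)) - 3 := by
  have h2 := Real.sq_sqrt (by norm_num : (2:ℝ) ≥ 0)
  obtain ⟨hlo, hhi⟩ := sqrt2_facts
  rw [beta0_eq]
  set s := Real.sqrt 2 with hs
  set b : ℝ := (2 + s) / 4 with hb
  have hb0 : 0 < b := by rw [hb]; nlinarith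
  have hb1 : b < 1 := by rw [hb]; nlinarith
  have h1b0 : 0 < 1 - b := by linarith
  have hprod : b * (1 - b) = 1 / 8 := by rw [hb]; nlinarith
  have hsum : Real.logb 2 b + Real.logb 2 (1 - b) = -3 := by
    rw [← Real.logb_mul (ne_of_gt hb0) (ne_of_gt h1b0), hprod]
    rw [show (1/8 : ℝ) = ((2:ℝ) ^ (3:ℕ))⁻¹ by norm_num, Real.logb_inv, Real.logb_pow,
      Real.logb_self_eq_one (by norm_num)]
    norm_num
  have hLneg : Real.logb 2 b < 0 := Real.logb_neg (by norm_num) hb0 hb1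
  have hkey : binH b = 3 * (1 - b) + (1 - 2 * b) * Real.logb 2 b := by
    unfold binH
    have : Real.logb 2 (1 - b) = -3 - Real.logb 2 b := by linarith
    rw [this]; ring
  rw [hkey]
  have hb67 : b < 6 / 7 := by rw [hb]; nlinarith
  have h2b : 1 - 2 * b < 0 := by rw [hb]; nlinarith
  nlinarith [mul_pos (neg_pos.2 h2b) (neg_pos.2 hLneg)]

theorem ns_security_fails :
    (∀ β : ℝ, 1/2 ≤ β → β ≤ (1/2) * (1 + 1 / Real.sqrt 2) →
      ¬ (binH β < 3 - 4 * (3/2 - β))) ∧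
    binH ((1/2) * (1 + 1 / Real.sqrt 2))
      > 4 * ((1/2) * (1 + 1 / Real.sqrt 2)) - 3 := by
  refine ⟨?_, endpoint_strict⟩
  intro β h1 h2 hlt
  set b : ℝ := (1/2) * (1 + 1 / Real.sqrt 2) with hbdef
  obtain ⟨hlo, hhi⟩ := sqrt2_facts
  have h2' := Real.sq_sqrt (by norm_num : (2:ℝ) ≥ 0)
  have hsne : Real.sqrt 2 ≠ 0 := by nlinarith
  have hbval : b = (2 + Real.sqrt 2) / 4 := beta0_eq
  have hbgt : (1/2 : ℝ) < b := by rw [hbval]; nlinarith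
  have hblt : b < 1 := by rw [hbval]; nlinarith
  -- concavity: β = a * (1/2) + c * b
  have hd : (0:ℝ) < b - 1/2 := by linarith
  set a : ℝ := (b - β) / (b - 1/2) with ha
  set c : ℝ := (β - 1/2) / (b - 1/2) with hc
  have ha0 : 0 ≤ a := div_nonneg (by linarith) (le_of_lt hd)
  have hc0 : 0 ≤ c := div_nonneg (by linarith) (le_of_lt hd)
  have hac : a + c = 1 := by
    rw [ha, hc, ← add_div, show b - β + (β - 1/2) = b - 1/2 by ring,
      div_self hd.ne']
  have hβ : a * (1/2) + c * b = β := by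
    rw [ha, hc, div_mul_eq_mul_div, div_mul_eq_mul_div, ← add_div,
      show (b - β) * (1/2) + (β - 1/2) * b = β * (b - 1/2) by ring]
    exact mul_div_cancel_right₀ β hd.ne' 
  have hconc := Real.strictConcave_binEntropy.concaveOn.2
    (x := (1/2:ℝ)) (y := b) (by constructor <;> norm_num)
    (by constructor <;> [linarith; linarith]) ha0 hc0 hac
  simp only [smul_eq_mul, hβ] at hconc
  have hlog2 : (0:ℝ) < Real.log 2 := Real.log_pos (by norm_num)
  have hbinH : binH β ≥ a * binH (1/2) + c * binH b := by
    simp only [binH_eq_binEntropy, ge_iff_le]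
    calc a * (Real.binEntropy (1/2) / Real.log 2) + c * (Real.binEntropy b / Real.log 2)
        = (a * Real.binEntropy (1/2) + c * Real.binEntropy b) / Real.log 2 := by ring
      _ ≤ Real.binEntropy β / Real.log 2 := by gcongr
  have hend := endpoint_strict
  rw [← hbdef] at hend
  rw [binH_half] at hbinH
  have : binH β ≥ 4 * β - 3 := by
    have h1' : a * 1 ≥ a * (4 * (1/2) - 3) := by nlinarith
    have h2'' : c * binH b ≥ c * (4 * b - 3) := by nlinarith
    calc binH β ≥ a * 1 + c * binH b := hbinH
      _ ≥ a * (4 * (1/2) - 3) + c * (4 * b - 3) := by linarith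
      _ = 4 * (a * (1/2) + c * b) - 3 * (a + c) := by ring
      _ = 4 * β - 3 := by rw [hβ, hac]; ring
  linarith
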